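/- arXiv:1904.04061 — 2 statements merged into one kernel-verified Lean document; each statement's English description precedes it below -/
import Mathlib

section
/- (Theorem 3) Let σ > 0, and for i = 1, …, N let δ_i ∈ ℝ^d be nonzero vectors, y_i ∈ {−1, 1}, and c_i = σ ‖δ_i‖_∞ > 0. Define gˢ : ℝ^{d×r} → ℝ by gˢ(U) = Σ_{i=1}^{N} G_{c_i}(−y_i (1 − δ_iᵀ U Uᵀ δ_i)). Then gˢ is differentiable at every U, and its Fréchet derivative at U is the linear map H ↦ Σ_{i=1}^{N} 2 y_i ν_i(U) δ_iᵀ H Uᵀ δ_i; equivalently, its gradient with respect to the Frobenius inner product is Σ_{i=1}^{N} 2 y_i ν_i(U) (δ_i δ_iᵀ) U, where ν_i(U) = clamp(−y_i (1 − δ_iᵀ U Uᵀ δ_i)/c_i, 0, 1). -/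
open Matrix

attribute [local instance] Matrix.normedAddCommGroup Matrix.normedSpace

/-- The smoothed hinge envelope `G_c`. -/
noncomputable def smoothedHinge (c a : ℝ) : ℝ :=
  if a ≤ 0 then 0 else if a ≤ c then a ^ 2 / (2 * c) else a - c / 2

/-!
Writing `a⁺ = max a 0`, the envelope is `G_c(a) = ((a⁺)² - ((a - c)⁺)²) / (2c)`, and `a ↦ (a⁺)²`
is differentiable with derivative `2a⁺`, so `G_c` is differentiable with derivative
`(a⁺ - (a - c)⁺) / c = clamp(a / c, 0, 1)`. The argument `-y(1 - δᵀVVᵀδ)` is an affine function of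
the quadratic form `δᵀVVᵀδ = ‖Vᵀδ‖²`, whose derivative at `U` is `H ↦ 2 δᵀHUᵀδ`; the chain rule
and linearity of the derivative in the sum give the Fréchet derivative, and
`δᵀHUᵀδ = tr((δδᵀU)ᵀH)` gives the gradient.
-/

theorem hasDerivAt_sq_max_zero (a : ℝ) :
    HasDerivAt (fun x : ℝ => max x 0 ^ 2) (2 * max a 0) a := by
  rcases lt_trichotomy a 0 with ha | rfl | ha
  · have hzero : (fun x : ℝ => max x 0 ^ 2) =ᶠ[nhds a] fun _ => 0 := by
      filter_upwards [Iio_mem_nhds ha] with x hx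
      simp [max_eq_right (Set.mem_Iio.mp hx).le]
    simpa [max_eq_right ha.le] using (hasDerivAt_const a (0 : ℝ)).congr_of_eventuallyEq hzero
  · have hleft : HasDerivWithinAt (fun x : ℝ => max x 0 ^ 2) 0 (Set.Iic 0) 0 :=
      (hasDerivWithinAt_const _ _ (0 : ℝ)).congr
        (fun x hx => by simp [max_eq_right (Set.mem_Iic.mp hx)]) (by simp)
    have hright : HasDerivWithinAt (fun x : ℝ => max x 0 ^ 2) 0 (Set.Ici 0) 0 :=
      ((hasDerivAt_pow 2 (0 : ℝ)).hasDerivWithinAt.congr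
        (fun x hx => by simp [max_eq_left (Set.mem_Ici.mp hx)]) (by simp)).congr_deriv (by simp)
    simpa [Set.Iic_union_Ici] using hleft.union hright
  · have hsq : (fun x : ℝ => max x 0 ^ 2) =ᶠ[nhds a] fun x => x ^ 2 := by
      filter_upwards [Ioi_mem_nhds ha] with x hx
      simp [max_eq_left (Set.mem_Ioi.mp hx).le]
    simpa [max_eq_left ha.le] using (hasDerivAt_pow 2 a).congr_of_eventuallyEq hsq

theorem smoothedHinge_eq_sub_sq {c : ℝ} (hc : 0 < c) (a : ℝ) :
    smoothedHinge c a = (max a 0 ^ 2 - max (a - c) 0 ^ 2) / (2 * c) := by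
  unfold smoothedHinge
  split_ifs with h₀ h₁
  · rw [max_eq_right h₀, max_eq_right (by linarith)]; simp
  · rw [max_eq_left (by linarith), max_eq_right (by linarith)]; ring
  · rw [max_eq_left (by linarith), max_eq_left (by linarith)]; field_simp; ring

theorem min_max_div_eq_max_sub_max_div {c : ℝ} (hc : 0 < c) (a : ℝ) :
    min (max (a / c) 0) 1 = (max a 0 - max (a - c) 0) / c := by
  rcases le_total a 0 with h₀ | h₀
  · rw [max_eq_right (div_nonpos_of_nonpos_of_nonneg h₀ hc.le), max_eq_right h₀,
      max_eq_right (by linarith)]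
    simp
  rcases le_total a c with h₁ | h₁
  · rw [max_eq_left (by positivity), min_eq_left ((div_le_one hc).mpr h₁), max_eq_left h₀,
      max_eq_right (by linarith), sub_zero]
  · rw [max_eq_left (by positivity), min_eq_right ((one_le_div hc).mpr h₁), max_eq_left h₀,
      max_eq_left (by linarith)]
    field_simp
    ring

theorem hasDerivAt_smoothedHinge {c : ℝ} (hc : 0 < c) (a : ℝ) :
    HasDerivAt (smoothedHinge c) (min (max (a / c) 0) 1) a := by
  have hshift : HasDerivAt (fun x : ℝ => max (x - c) 0 ^ 2) (2 * max (a - c) 0) a := by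
    simpa [Function.comp_def] using
      (hasDerivAt_sq_max_zero (a - c)).comp a ((hasDerivAt_id a).sub_const c)
  rw [funext (smoothedHinge_eq_sub_sq hc), min_max_div_eq_max_sub_max_div hc]
  exact (((hasDerivAt_sq_max_zero a).sub hshift).div_const (2 * c)).congr_deriv (by ring)

theorem ContinuousLinearMap.hasFDerivAt_apply_self {𝕜 E F : Type*} [NontriviallyNormedField 𝕜]
    [NormedAddCommGroup E] [NormedSpace 𝕜 E] [NormedAddCommGroup F] [NormedSpace 𝕜 F]
    (B : E →L[𝕜] E →L[𝕜] F) (x : E) : HasFDerivAt (fun v => B v v) (B x + B.flip x) x :=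
  (B.hasFDerivAt_of_bilinear (hasFDerivAt_id x) (hasFDerivAt_id x)).congr_fderiv (by ext; simp)

theorem Matrix.dotProduct_mul_transpose_mulVec {R m n : Type*} [CommSemiring R] [Fintype m]
    [Fintype n] (δ : m → R) (A C : Matrix m n R) :
    δ ⬝ᵥ ((A * Cᵀ) *ᵥ δ) = (δ ᵥ* A) ⬝ᵥ (δ ᵥ* C) := by
  rw [← mulVec_mulVec, dotProduct_mulVec, mulVec_transpose]

theorem Matrix.trace_transpose_vecMulVec_mul_mul {R m n : Type*} [CommSemiring R] [Fintype m]
    [Fintype n] (δ : m → R) (A C : Matrix m n R) :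
    trace ((vecMulVec δ δ * A)ᵀ * C) = (δ ᵥ* A) ⬝ᵥ (δ ᵥ* C) := by
  rw [vecMulVec_mul, transpose_vecMulVec, vecMulVec_mul, trace_vecMulVec]

section VecMulDotProduct

variable {𝕜 m n : Type*} [NontriviallyNormedField 𝕜] [CompleteSpace 𝕜] [Fintype m] [Fintype n]

noncomputable def Matrix.vecMulDotProduct (δ : m → 𝕜) :
    Matrix m n 𝕜 →L[𝕜] Matrix m n 𝕜 →L[𝕜] 𝕜 :=
  LinearMap.toContinuousLinearMap <|
    (LinearMap.toContinuousLinearMap : (Matrix m n 𝕜 →ₗ[𝕜] 𝕜) ≃ₗ[𝕜] _).toLinearMap ∘ₗ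
      LinearMap.mk₂ 𝕜 (fun A C => (δ ᵥ* A) ⬝ᵥ (δ ᵥ* C))
        (by simp [vecMul_add, add_dotProduct]) (by simp [vecMul_smul, smul_dotProduct])
        (by simp [vecMul_add, dotProduct_add]) (by simp [vecMul_smul, dotProduct_smul])

@[simp]
theorem Matrix.vecMulDotProduct_apply (δ : m → 𝕜) (A C : Matrix m n 𝕜) :
    vecMulDotProduct δ A C = (δ ᵥ* A) ⬝ᵥ (δ ᵥ* C) :=
  rfl

theorem Matrix.vecMulDotProduct_flip (δ : m → 𝕜) :
    (vecMulDotProduct δ : Matrix m n 𝕜 →L[𝕜] _).flip = vecMulDotProduct δ := by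
  refine ContinuousLinearMap.ext fun A => ContinuousLinearMap.ext fun C => ?_
  exact dotProduct_comm _ _

theorem Matrix.hasFDerivAt_dotProduct_mul_transpose_mulVec (δ : m → 𝕜) (U : Matrix m n 𝕜) :
    HasFDerivAt (fun V : Matrix m n 𝕜 => δ ⬝ᵥ ((V * Vᵀ) *ᵥ δ))
      ((2 : 𝕜) • vecMulDotProduct δ U) U := by
  have h := (vecMulDotProduct δ).hasFDerivAt_apply_self U
  rw [vecMulDotProduct_flip, ← two_smul 𝕜] at h
  simp only [dotProduct_mul_transpose_mulVec]
  exact h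

end VecMulDotProduct

theorem hasFDerivAt_smoothedHinge_margin {m n : Type*} [Fintype m] [Fintype n] {c : ℝ}
    (hc : 0 < c) (y : ℝ) (δ : m → ℝ) (U : Matrix m n ℝ) :
    HasFDerivAt (fun V : Matrix m n ℝ => smoothedHinge c (-y * (1 - δ ⬝ᵥ ((V * Vᵀ) *ᵥ δ))))
      ((2 * y * min (max (-y * (1 - δ ⬝ᵥ ((U * Uᵀ) *ᵥ δ)) / c) 0) 1) • vecMulDotProduct δ U) U := by
  have hmargin : HasFDerivAt (fun V : Matrix m n ℝ => -y * (1 - δ ⬝ᵥ ((V * Vᵀ) *ᵥ δ)))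
      (y • (2 : ℝ) • vecMulDotProduct δ U) U := by
    rw [show (fun V : Matrix m n ℝ => -y * (1 - δ ⬝ᵥ ((V * Vᵀ) *ᵥ δ)))
        = fun V => y * δ ⬝ᵥ ((V * Vᵀ) *ᵥ δ) - y from funext fun V => by ring]
    exact ((hasFDerivAt_dotProduct_mul_transpose_mulVec δ U).const_mul y).sub_const y
  set ν := min (max (-y * (1 - δ ⬝ᵥ ((U * Uᵀ) *ᵥ δ)) / c) 0) 1
  have hcoef : ν • y • (2 : ℝ) • vecMulDotProduct δ U = (2 * y * ν) • vecMulDotProduct δ U := by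
    simp only [smul_smul]
    ring_nf
  rw [← hcoef]
  exact (hasDerivAt_smoothedHinge hc _).comp_hasFDerivAt U hmargin

theorem smoothed_hinge_loss_fderiv_general (d r N : ℕ) (σ : ℝ) (hσ : 0 < σ)
    (δ : Fin N → Fin d → ℝ) (hδ : ∀ i, δ i ≠ 0)
    (y : Fin N → ℝ)
    (c : Fin N → ℝ) (hc : ∀ i, c i = σ * ‖δ i‖) :
    (∀ i, 0 < c i) ∧
    ∀ U : Matrix (Fin d) (Fin r) ℝ,
      let ν : Fin N → ℝ := fun i =>
        min (max (-(y i) * (1 - δ i ⬝ᵥ ((U * Uᵀ) *ᵥ δ i)) / c i) 0) 1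
      DifferentiableAt ℝ
        (fun V : Matrix (Fin d) (Fin r) ℝ =>
          ∑ i, smoothedHinge (c i) (-(y i) * (1 - δ i ⬝ᵥ ((V * Vᵀ) *ᵥ δ i)))) U ∧
      ∀ H : Matrix (Fin d) (Fin r) ℝ,
        fderiv ℝ
            (fun V : Matrix (Fin d) (Fin r) ℝ =>
              ∑ i, smoothedHinge (c i) (-(y i) * (1 - δ i ⬝ᵥ ((V * Vᵀ) *ᵥ δ i)))) U H
          = ∑ i, 2 * y i * ν i * (δ i ⬝ᵥ ((H * Uᵀ) *ᵥ δ i)) ∧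
        fderiv ℝ
            (fun V : Matrix (Fin d) (Fin r) ℝ =>
              ∑ i, smoothedHinge (c i) (-(y i) * (1 - δ i ⬝ᵥ ((V * Vᵀ) *ᵥ δ i)))) U H
          = Matrix.trace
              ((∑ i, (2 * y i * ν i) • (Matrix.vecMulVec (δ i) (δ i) * U))ᵀ * H) := by
  have hc_pos : ∀ i, 0 < c i := fun i => hc i ▸ mul_pos hσ (norm_pos_iff.mpr (hδ i))
  refine ⟨hc_pos, fun U => ?_⟩
  intro ν
  -- The explicit type puts the goal's instances on `Matrix` (not those of the local norm) into
  -- `hg`, so that `hg.fderiv` rewrites the goal.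
  have hg : HasFDerivAt
      (fun V : Matrix (Fin d) (Fin r) ℝ =>
        ∑ i, smoothedHinge (c i) (-(y i) * (1 - δ i ⬝ᵥ ((V * Vᵀ) *ᵥ δ i))))
      (∑ i, (2 * y i * ν i) • vecMulDotProduct (δ i) U) U :=
    HasFDerivAt.fun_sum fun i _ => hasFDerivAt_smoothedHinge_margin (hc_pos i) (y i) (δ i) U
  refine ⟨hg.differentiableAt, fun H => ?_⟩
  rw [hg.fderiv]
  constructor
  · simp only [_root_.sum_apply, _root_.smul_apply,
      vecMulDotProduct_apply, dotProduct_mul_transpose_mulVec, smul_eq_mul, dotProduct_comm]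
  · simp only [_root_.sum_apply, _root_.smul_apply,
      vecMulDotProduct_apply, transpose_sum, Matrix.sum_mul, trace_sum, transpose_smul, smul_mul,
      trace_smul, trace_transpose_vecMulVec_mul_mul, smul_eq_mul]

/-- Theorem 3: the Nesterov-smoothed empirical hinge loss
`gˢ(U) = Σᵢ G_{cᵢ}(-yᵢ(1 - δᵢᵀUUᵀδᵢ))`, with `cᵢ = σ‖δᵢ‖_∞ > 0`, is differentiable at every
`U`, with Fréchet derivative `H ↦ Σᵢ 2 yᵢ νᵢ(U) δᵢᵀ H Uᵀ δᵢ`; equivalently its gradient with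
respect to the Frobenius inner product is `Σᵢ 2 yᵢ νᵢ(U) (δᵢδᵢᵀ) U`, where
`νᵢ(U) = clamp(-yᵢ(1 - δᵢᵀUUᵀδᵢ)/cᵢ, 0, 1)`. (The norm on `Fin d → ℝ` is the sup norm.) -/
theorem smoothed_hinge_loss_fderiv (d r N : ℕ) (σ : ℝ) (hσ : 0 < σ)
    (δ : Fin N → Fin d → ℝ) (hδ : ∀ i, δ i ≠ 0)
    (y : Fin N → ℝ) (hy : ∀ i, y i = 1 ∨ y i = -1)
    (c : Fin N → ℝ) (hc : ∀ i, c i = σ * ‖δ i‖) :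
    (∀ i, 0 < c i) ∧
    ∀ U : Matrix (Fin d) (Fin r) ℝ,
      let ν : Fin N → ℝ := fun i =>
        min (max (-(y i) * (1 - δ i ⬝ᵥ ((U * Uᵀ) *ᵥ δ i)) / c i) 0) 1
      DifferentiableAt ℝ
        (fun V : Matrix (Fin d) (Fin r) ℝ =>
          ∑ i, smoothedHinge (c i) (-(y i) * (1 - δ i ⬝ᵥ ((V * Vᵀ) *ᵥ δ i)))) U ∧
      ∀ H : Matrix (Fin d) (Fin r) ℝ,
        fderiv ℝ
            (fun V : Matrix (Fin d) (Fin r) ℝ =>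
              ∑ i, smoothedHinge (c i) (-(y i) * (1 - δ i ⬝ᵥ ((V * Vᵀ) *ᵥ δ i)))) U H
          = ∑ i, 2 * y i * ν i * (δ i ⬝ᵥ ((H * Uᵀ) *ᵥ δ i)) ∧
        fderiv ℝ
            (fun V : Matrix (Fin d) (Fin r) ℝ =>
              ∑ i, smoothedHinge (c i) (-(y i) * (1 - δ i ⬝ᵥ ((V * Vᵀ) *ᵥ δ i)))) U H
          = Matrix.trace
              ((∑ i, (2 * y i * ν i) • (Matrix.vecMulVec (δ i) (δ i) * U))ᵀ * H) :=
  smoothed_hinge_loss_fderiv_general d r N σ hσ δ hδ y c hc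
end

section
/- (Rademacher contraction, finite one-sided form) Let N ≥ 1, let T be a nonempty set, let a₁, …, a_N : T → ℝ be functions such that the set {(a₁(t), …, a_N(t)) : t ∈ T} ⊆ ℝ^N is bounded, and let ψ₁, …, ψ_N : ℝ → ℝ each be Z-Lipschitz for some Z ≥ 0 with ψ_i(0) = 0. Then 2^{−N} Σ_{s ∈ {−1,1}^N} sup_{t ∈ T} Σ_{i=1}^{N} s_i ψ_i(a_i(t)) ≤ Z · 2^{−N} Σ_{s ∈ {−1,1}^N} sup_{t ∈ T} Σ_{i=1}^{N} s_i a_i(t), where the outer sums average over all sign vectors s ∈ {−1, 1}^N. -/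
/-!
Contract one coordinate at a time. Once the other signs are fixed, averaging over the sign of the
coordinate being contracted reduces everything to
`sup (g + b) + sup (g - b) ≤ sup (g + c) + sup (g - c)` whenever `|b t - b u| ≤ |c t - c u|`,
which holds because every pair `(t, u)` on the left is dominated by `(t, u)` or `(u, t)` on the
right. Induction on the number of coordinates, carrying an arbitrary offset `g` bounded above,
gives the comparison `∑ₛ sup Σ sᵢ bᵢ ≤ ∑ₛ sup Σ sᵢ cᵢ`; contraction is the case
`bᵢ = ψᵢ ∘ aᵢ`, `cᵢ = Z • aᵢ`.
-/

open Finset Set Bornology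
open scoped Pointwise

def rademacherSign (ε : Bool) : ℝ := if ε then 1 else -1

@[simp] lemma rademacherSign_true : rademacherSign true = 1 := rfl

@[simp] lemma rademacherSign_false : rademacherSign false = -1 := rfl

lemma Fin.sum_pi_succ {M α : Type*} [AddCommMonoid M] [Fintype α] {n : ℕ}
    (f : (Fin (n + 1) → α) → M) : ∑ s, f s = ∑ x, ∑ s, f (Fin.cons x s) := by
  rw [← (Fin.consEquiv fun _ => α).sum_comp, Fintype.sum_prod_type]
  rfl

section Bounded

variable {ι T 𝕜 : Type*} [NormedField 𝕜]

lemma isBounded_range_of_dist_le {α β : Type*} [PseudoMetricSpace α] [PseudoMetricSpace β]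
    {b : T → α} {c : T → β} (hbc : ∀ t u, dist (b t) (b u) ≤ dist (c t) (c u))
    (hc : IsBounded (range c)) : IsBounded (range b) := by
  obtain ⟨C, hC⟩ := Metric.isBounded_range_iff.1 hc
  exact Metric.isBounded_range_iff.2 ⟨C, fun t u => (hbc t u).trans (hC t u)⟩

lemma isBounded_range_const_mul {f : T → 𝕜} (hf : IsBounded (range f)) (w : 𝕜) :
    IsBounded (range fun t => w * f t) := by
  simpa only [← range_smul, smul_eq_mul] using hf.smul₀ w

lemma isBounded_range_sum_mul [Fintype ι] (w : ι → 𝕜) {f : ι → T → 𝕜}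
    (hf : ∀ i, IsBounded (range (f i))) : IsBounded (range fun t => ∑ i, w i * f i t) := by
  choose M hM using fun i => isBounded_iff_forall_norm_le.1 (hf i)
  refine isBounded_iff_forall_norm_le.2 ⟨∑ i, ‖w i‖ * M i, ?_⟩
  rintro _ ⟨t, rfl⟩
  refine (norm_sum_le _ _).trans (sum_le_sum fun i _ => ?_)
  rw [norm_mul]
  exact mul_le_mul_of_nonneg_left (hM i _ (mem_range_self t)) (norm_nonneg _)

end Bounded

section Comparison

variable {T : Type*} [Nonempty T]

lemma sum_bool_iSup_add_sign_mul_le {g b c : T → ℝ}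
    (hbc : ∀ t u, dist (b t) (b u) ≤ dist (c t) (c u))
    (hg : BddAbove (range g)) (hc : IsBounded (range c)) :
    ∑ ε : Bool, ⨆ t, g t + rademacherSign ε * b t ≤
      ∑ ε : Bool, ⨆ t, g t + rademacherSign ε * c t := by
  have hplus : BddAbove (range fun t => g t + c t) := hg.range_add hc.bddAbove
  have hminus : BddAbove (range fun t => g t - c t) := by
    simpa only [sub_eq_add_neg] using hg.range_add hc.bddBelow.range_neg
  simp only [Fintype.sum_bool, rademacherSign_true, rademacherSign_false, one_mul, neg_one_mul,
    ← sub_eq_add_neg]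
  set X := (⨆ t, g t + c t) + ⨆ t, g t - c t
  have pair : ∀ t u, (g t + b t) + (g u - b u) ≤ X := by
    intro t u
    have hb : b t - b u ≤ |c t - c u| := by
      simpa only [Real.dist_eq] using (le_abs_self _).trans (hbc t u)
    rcases le_total (c u) (c t) with h | h
    · rw [abs_of_nonneg (sub_nonneg.2 h)] at hb
      linarith [le_ciSup hplus t, le_ciSup hminus u]
    · rw [abs_of_nonpos (sub_nonpos.2 h)] at hb
      linarith [le_ciSup hplus u, le_ciSup hminus t]
  have : (⨆ t, g t + b t) ≤ X - ⨆ u, g u - b u :=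
    ciSup_le fun t => le_sub_comm.1 <| ciSup_le fun u => le_sub_iff_add_le'.2 (pair t u)
  linarith

theorem sum_iSup_add_signed_sum_le {n : ℕ} {b c : Fin n → T → ℝ}
    (hbc : ∀ i t u, dist (b i t) (b i u) ≤ dist (c i t) (c i u))
    (hc : ∀ i, IsBounded (range (c i))) {g : T → ℝ} (hg : BddAbove (range g)) :
    ∑ s : Fin n → Bool, ⨆ t, g t + ∑ i, rademacherSign (s i) * b i t ≤
      ∑ s : Fin n → Bool, ⨆ t, g t + ∑ i, rademacherSign (s i) * c i t := by
  induction n generalizing g with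
  | zero => simp
  | succ n ih =>
    have hb : ∀ i, IsBounded (range (b i)) := fun i => isBounded_range_of_dist_le (hbc i) (hc i)
    calc ∑ s : Fin (n + 1) → Bool, ⨆ t, g t + ∑ i, rademacherSign (s i) * b i t
        = ∑ s : Fin n → Bool, ∑ ε : Bool,
            ⨆ t, (g t + ∑ i, rademacherSign (s i) * b i.succ t) +
              rademacherSign ε * b 0 t := by
          rw [Fin.sum_pi_succ, Finset.sum_comm]
          refine sum_congr rfl fun s _ => sum_congr rfl fun ε _ => iSup_congr fun t => ?_
          simp only [Fin.sum_univ_succ, Fin.cons_zero, Fin.cons_succ]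
          ring
      _ ≤ ∑ s : Fin n → Bool, ∑ ε : Bool,
            ⨆ t, (g t + ∑ i, rademacherSign (s i) * b i.succ t) + rademacherSign ε * c 0 t :=
          sum_le_sum fun s _ => sum_bool_iSup_add_sign_mul_le (hbc 0)
            (hg.range_add (isBounded_range_sum_mul (fun i => rademacherSign (s i))
              fun i => hb i.succ).bddAbove) (hc 0)
      _ = ∑ ε : Bool, ∑ s : Fin n → Bool,
            ⨆ t, (g t + rademacherSign ε * c 0 t) +
              ∑ i, rademacherSign (s i) * b i.succ t := by
          rw [Finset.sum_comm]
          refine sum_congr rfl fun ε _ => sum_congr rfl fun s _ => iSup_congr fun t => ?_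
          ring
      _ ≤ ∑ ε : Bool, ∑ s : Fin n → Bool,
            ⨆ t, (g t + rademacherSign ε * c 0 t) + ∑ i, rademacherSign (s i) * c i.succ t :=
          sum_le_sum fun ε _ => ih (fun i => hbc i.succ) (fun i => hc i.succ)
            (hg.range_add (isBounded_range_const_mul (hc 0) (rademacherSign ε)).bddAbove)
      _ = ∑ s : Fin (n + 1) → Bool, ⨆ t, g t + ∑ i, rademacherSign (s i) * c i t := by
          rw [Fin.sum_pi_succ]
          refine sum_congr rfl fun ε _ => sum_congr rfl fun s _ => iSup_congr fun t => ?_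
          simp only [Fin.sum_univ_succ, Fin.cons_zero, Fin.cons_succ]
          ring

theorem sum_iSup_signed_sum_le_of_dist_le {n : ℕ} {b c : Fin n → T → ℝ}
    (hbc : ∀ i t u, dist (b i t) (b i u) ≤ dist (c i t) (c i u))
    (hc : ∀ i, IsBounded (range (c i))) :
    ∑ s : Fin n → Bool, ⨆ t, ∑ i, rademacherSign (s i) * b i t ≤
      ∑ s : Fin n → Bool, ⨆ t, ∑ i, rademacherSign (s i) * c i t := by
  simpa only [zero_add] using
    sum_iSup_add_signed_sum_le hbc hc (g := fun _ => 0) (by simp)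

end Comparison

theorem rademacher_contraction_finite_general (N : ℕ) {T : Type*} [Nonempty T]
    (a : Fin N → T → ℝ) (hbdd : ∃ C : ℝ, ∀ i : Fin N, ∀ t : T, |a i t| ≤ C)
    (ψ : Fin N → ℝ → ℝ) (Z : ℝ) (hZ : 0 ≤ Z)
    (hlip : ∀ i, LipschitzWith Z.toNNReal (ψ i)) :
    ((2 : ℝ) ^ N)⁻¹ *
        ∑ s : Fin N → Bool, ⨆ t : T, ∑ i, (if s i then (1 : ℝ) else -1) * ψ i (a i t)
      ≤ Z * (((2 : ℝ) ^ N)⁻¹ *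
        ∑ s : Fin N → Bool, ⨆ t : T, ∑ i, (if s i then (1 : ℝ) else -1) * a i t) := by
  obtain ⟨C, hC⟩ := hbdd
  have hcontract :
      ∀ i t u, dist (ψ i (a i t)) (ψ i (a i u)) ≤ dist (Z * a i t) (Z * a i u) := by
    intro i t u
    have := (hlip i).dist_le_mul (a i t) (a i u)
    rwa [Real.coe_toNNReal Z hZ, ← Real.norm_of_nonneg hZ, ← dist_smul₀] at this
  have hbounded : ∀ i, IsBounded (range fun t => Z * a i t) := fun i =>
    isBounded_range_const_mul (isBounded_iff_forall_norm_le.2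
      ⟨C, by rintro _ ⟨t, rfl⟩; exact hC i t⟩) Z
  have hZ_out : ∑ s : Fin N → Bool, ⨆ t, ∑ i, rademacherSign (s i) * (Z * a i t) =
      Z * ∑ s : Fin N → Bool, ⨆ t, ∑ i, rademacherSign (s i) * a i t := by
    rw [mul_sum]
    refine sum_congr rfl fun s _ => ?_
    rw [Real.mul_iSup_of_nonneg hZ]
    refine iSup_congr fun t => ?_
    rw [mul_sum]
    exact sum_congr rfl fun i _ => mul_left_comm _ _ _
  rw [mul_left_comm]
  exact mul_le_mul_of_nonneg_left
    ((sum_iSup_signed_sum_le_of_dist_le hcontract hbounded).trans_eq hZ_out) (by positivity)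

/-- Rademacher contraction (finite one-sided form): averaging over all sign vectors
`s ∈ {-1,1}^N` (encoded by `s : Fin N → Bool`), the empirical Rademacher average of the
contracted class `{(ψᵢ(aᵢ(t)))ᵢ : t ∈ T}` is at most `Z` times that of the original class
`{(aᵢ(t))ᵢ : t ∈ T}`, for `Z`-Lipschitz functions `ψᵢ` with `ψᵢ(0) = 0`. -/
theorem rademacher_contraction_finite (N : ℕ) (hN : 1 ≤ N) {T : Type*} [Nonempty T]
    (a : Fin N → T → ℝ) (hbdd : ∃ C : ℝ, ∀ i : Fin N, ∀ t : T, |a i t| ≤ C)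
    (ψ : Fin N → ℝ → ℝ) (Z : ℝ) (hZ : 0 ≤ Z)
    (hlip : ∀ i, LipschitzWith Z.toNNReal (ψ i)) (hψ0 : ∀ i, ψ i 0 = 0) :
    ((2 : ℝ) ^ N)⁻¹ *
        ∑ s : Fin N → Bool, ⨆ t : T, ∑ i, (if s i then (1 : ℝ) else -1) * ψ i (a i t)
      ≤ Z * (((2 : ℝ) ^ N)⁻¹ *
        ∑ s : Fin N → Bool, ⨆ t : T, ∑ i, (if s i then (1 : ℝ) else -1) * a i t) :=
  rademacher_contraction_finite_general N a hbdd ψ Z hZ hlip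
end
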